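/- arXiv:math/0411598 — 9 statements merged into one kernel-verified Lean document; each statement's English description precedes it below -/
import Mathlib

section
/- Let n ≥ 1, m = 2n, and let y : [0,1] → ℂ be 2n times continuously differentiable. Then 2·Im(∫₀¹ (−i)^{2n} y^{(2n)}(x)·conj(y(x)) dx) = q_J(ŷ₁) − q_J(ŷ₀). -/
/-- The quadratic form `q_J(u) = i·(−1)^{n+1} · Σ_{p=0}^{2n−1} (−1)^{p+1} u_p·conj(u_{2n−1−p})`
of the matrix `J` (here `Fin.rev p` has value `2n−1−p`). -/
noncomputable def qJ (n : ℕ) (u : Fin (2 * n) → ℂ) : ℂ :=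
  Complex.I * (-1 : ℂ) ^ (n + 1) *
    ∑ p : Fin (2 * n), (-1 : ℂ) ^ ((p : ℕ) + 1) * u p * (starRingEnd ℂ) (u p.rev)

/-
Lagrange's identity: by the Leibniz rule the alternating sum `Σ (-1)^(p+1) y^(p) conj y^(2n-1-p)`
has telescoping derivative `y^(2n) conj y - y conj y^(2n)`, so `t ↦ q_J(ŷ(t))` has derivative
`2 Im((-i)^(2n) y^(2n) conj y)`, and the identity is the fundamental theorem of calculus.
-/

open Complex ComplexConjugate

theorem hasDerivAt_iteratedDeriv_of_contDiff {E : Type*} [NormedAddCommGroup E]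
    [NormedSpace ℝ E] {N : ℕ} {f : ℝ → E} (hf : ContDiff ℝ N f) {k : ℕ} (hk : k < N)
    (x : ℝ) :
    HasDerivAt (iteratedDeriv k f) (iteratedDeriv (k + 1) f x) x := by
  rw [iteratedDeriv_succ]
  exact ((hf.differentiable_iteratedDeriv k (by exact_mod_cast hk)) x).hasDerivAt

/- Each term `(-1)^(p+1) y^(p) conj y^(m-1-p)` differentiates to `g (p+1) - g p` with
`g k = (-1)^k y^(k) conj y^(m-k)`, so the sum telescopes. -/
theorem hasDerivAt_sum_neg_one_pow_iteratedDeriv_mul_conj {m : ℕ} {y : ℝ → ℂ}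
    (hy : ContDiff ℝ m y) (x : ℝ) :
    HasDerivAt
      (fun t => ∑ p : Fin m,
        (-1 : ℂ) ^ ((p : ℕ) + 1) * iteratedDeriv p y t * conj (iteratedDeriv p.rev y t))
      ((-1) ^ m * iteratedDeriv m y x * conj (y x) - y x * conj (iteratedDeriv m y x)) x := by
  set g : ℕ → ℂ := fun k => (-1) ^ k * iteratedDeriv k y x * conj (iteratedDeriv (m - k) y x)
  have hterm : ∀ p : Fin m, HasDerivAt
      (fun t => (-1 : ℂ) ^ ((p : ℕ) + 1) * iteratedDeriv p y t * conj (iteratedDeriv p.rev y t))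
      (g (p + 1) - g p) x := by
    intro p
    have hp := hasDerivAt_iteratedDeriv_of_contDiff hy p.isLt x
    have hrev := hasDerivAt_iteratedDeriv_of_contDiff hy p.rev.isLt x
    refine ((hp.const_mul ((-1 : ℂ) ^ ((p : ℕ) + 1))).mul hrev.star).congr_deriv ?_
    have hrev_val : (p.rev : ℕ) = m - (p + 1) := Fin.val_rev p
    have hrev_succ : (p.rev : ℕ) + 1 = m - p := by omega
    simp only [g, hrev_succ, ← hrev_val, pow_succ, starRingEnd_apply]
    ring
  refine (HasDerivAt.fun_sum fun p _ => hterm p).congr_deriv ?_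
  rw [Fin.sum_univ_eq_sum_range (fun k => g (k + 1) - g k), Finset.sum_range_sub]
  simp [g]

theorem two_mul_im_neg_I_pow_mul_conj (n : ℕ) (a b : ℂ) :
    (2 * ((-I) ^ (2 * n) * a * conj b).im : ℂ) =
      I * (-1) ^ (n + 1) * (a * conj b - b * conj a) := by
  have hI : (-I) ^ (2 * n) = (-1) ^ n := by rw [pow_mul, neg_sq, I_sq]
  rw [hI]
  have hz := sub_conj ((-1) ^ n * a * conj b)
  simp only [map_mul, map_pow, map_neg, map_one, conj_conj] at hz
  push_cast at hz
  rw [pow_succ]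
  linear_combination I * hz + (2 * (((-1) ^ n * a * conj b).im : ℂ)) * I_mul_I

theorem hasDerivAt_qJ_iteratedDeriv {n : ℕ} {y : ℝ → ℂ} (hy : ContDiff ℝ (2 * n) y)
    (x : ℝ) :
    HasDerivAt (fun t => qJ n fun k => iteratedDeriv k y t)
      (2 * ((-I) ^ (2 * n) * iteratedDeriv (2 * n) y x * conj (y x)).im) x := by
  have hsum :=
    hasDerivAt_sum_neg_one_pow_iteratedDeriv_mul_conj (m := 2 * n) (by exact_mod_cast hy) x
  rw [pow_mul, neg_one_sq, one_pow, one_mul] at hsum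
  rw [two_mul_im_neg_I_pow_mul_conj]
  exact hsum.const_mul _

theorem stmt1_general (n : ℕ) (y : ℝ → ℂ) (hy : ContDiff ℝ (2 * n) y) :
    (2 * (∫ x in (0:ℝ)..1,
        (-Complex.I) ^ (2 * n) * iteratedDeriv (2 * n) y x * (starRingEnd ℂ) (y x)).im : ℂ)
      = qJ n (fun k => iteratedDeriv (k : ℕ) y 1)
        - qJ n (fun k => iteratedDeriv (k : ℕ) y 0) := by
  set f : ℝ → ℂ := fun x => (-I) ^ (2 * n) * iteratedDeriv (2 * n) y x * conj (y x)
  have hf : Continuous f :=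
    (continuous_const.mul (hy.continuous_iteratedDeriv _ le_rfl)).mul
      (continuous_conj.comp hy.continuous)
  calc (2 * (∫ x in (0:ℝ)..1, f x).im : ℂ)
      = ∫ x in (0:ℝ)..1, 2 * ((f x).im : ℂ) := by
        rw [intervalIntegral.integral_const_mul, intervalIntegral.integral_ofReal]
        exact congrArg (2 * ofReal ·)
          (intervalIntegral.intervalIntegral_im (hf.intervalIntegrable _ _)).symm
    _ = _ := intervalIntegral.integral_eq_sub_of_hasDerivAt
        (fun x _ => hasDerivAt_qJ_iteratedDeriv hy x)
        ((continuous_const.mul (continuous_ofReal.comp (continuous_im.comp hf))).intervalIntegrable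
          _ _)

/-- for `m = 2n` and `y` 2n-times continuously differentiable,
`2·Im(∫₀¹ (−i)^{2n} y^{(2n)}·conj(y)) = q_J(ŷ₁) − q_J(ŷ₀)`. -/
theorem stmt1 (n : ℕ) (hn : 1 ≤ n) (y : ℝ → ℂ) (hy : ContDiff ℝ (2 * n) y) :
    (2 * (∫ x in (0:ℝ)..1,
        (-Complex.I) ^ (2 * n) * iteratedDeriv (2 * n) y x * (starRingEnd ℂ) (y x)).im : ℂ)
      = qJ n (fun k => iteratedDeriv (k : ℕ) y 1)
        - qJ n (fun k => iteratedDeriv (k : ℕ) y 0) :=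
  stmt1_general n y hy
end

section
/- Let n ≥ 1, m = 2n−1, and let y : [0,1] → ℂ be (2n−1) times continuously differentiable. Then 2·Im(∫₀¹ (−i)^{2n−1} y^{(2n−1)}(x)·conj(y(x)) dx) = q_K(ŷ₁) − q_K(ŷ₀). -/
/-- The quadratic form `q_K(u) = (−1)^n · Σ_{p=0}^{2n−2} (−1)^p u_p·conj(u_{2n−2−p})`
of the matrix `K` (here `Fin.rev p` has value `2n−2−p`). -/
noncomputable def qK (n : ℕ) (u : Fin (2 * n - 1) → ℂ) : ℂ :=
  (-1 : ℂ) ^ n *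
    ∑ p : Fin (2 * n - 1), (-1 : ℂ) ^ (p : ℕ) * u p * (starRingEnd ℂ) (u p.rev)

/-!
Integration by parts `m` times. The bilinear concomitant
`B(x) = Σ_{p<m} (-1)^p f^{(p)}(x) · conj (g^{(m-1-p)}(x))` has derivative
`f · conj g^{(m)} - (-1)^m f^{(m)} · conj g`, because the derivative of the sum telescopes.
Taking `f = g = y` and `w = ∫₀¹ y^{(m)} · conj y` gives `conj w - (-1)^m w = B(1) - B(0)`, while
`2 Im ((-i)^m w) = i^{m+1} (conj w - (-1)^m w)`. For `m = 2n - 1`, `i^{m+1} B` is `q_K`.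
-/

open Finset intervalIntegral ComplexConjugate

theorem Finset.sum_range_neg_one_pow_mul_telescope {R : Type*} [CommRing R] (m : ℕ)
    (a b : ℕ → R) :
    ∑ p ∈ range m, (-1) ^ p * (a (p + 1) * b (m - (p + 1)) + a p * b (m - p))
      = a 0 * b m - (-1) ^ m * a m * b 0 := by
  have hterm : ∀ p ∈ range m, (-1) ^ p * (a (p + 1) * b (m - (p + 1)) + a p * b (m - p))
      = (-1) ^ p * a p * b (m - p) - (-1) ^ (p + 1) * a (p + 1) * b (m - (p + 1)) := by
    intro p _
    ring
  rw [sum_congr rfl hterm, sum_range_sub']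
  simp

theorem ContDiff.hasDerivAt_iteratedDeriv {𝕜 F : Type*} [NontriviallyNormedField 𝕜]
    [NormedAddCommGroup F] [NormedSpace 𝕜 F] {f : 𝕜 → F} {m p : ℕ} (hf : ContDiff 𝕜 m f)
    (hp : p < m) (x : 𝕜) : HasDerivAt (iteratedDeriv p f) (iteratedDeriv (p + 1) f x) x := by
  rw [iteratedDeriv_succ]
  exact (hf.differentiable_iteratedDeriv p (mod_cast hp) x).hasDerivAt

section Concomitant

variable {𝕜 : Type*} [RCLike 𝕜] {m : ℕ} {f g : ℝ → 𝕜}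

noncomputable def bilinearConcomitant (m : ℕ) (f g : ℝ → 𝕜) (x : ℝ) : 𝕜 :=
  ∑ p ∈ range m, (-1) ^ p * iteratedDeriv p f x * conj (iteratedDeriv (m - (p + 1)) g x)

theorem hasDerivAt_bilinearConcomitant (hf : ContDiff ℝ m f) (hg : ContDiff ℝ m g) (x : ℝ) :
    HasDerivAt (bilinearConcomitant m f g)
      (f x * conj (iteratedDeriv m g x) - (-1) ^ m * iteratedDeriv m f x * conj (g x)) x := by
  have hterm : ∀ p ∈ range m,
      HasDerivAt (fun x ↦ (-1) ^ p * iteratedDeriv p f x * conj (iteratedDeriv (m - (p + 1)) g x))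
        ((-1) ^ p * (iteratedDeriv (p + 1) f x * conj (iteratedDeriv (m - (p + 1)) g x)
          + iteratedDeriv p f x * conj (iteratedDeriv (m - p) g x))) x := by
    intro p hp
    rw [mem_range] at hp
    have hg' := (hg.hasDerivAt_iteratedDeriv (p := m - (p + 1)) (by omega) x).star
    rw [show m - (p + 1) + 1 = m - p by omega] at hg'
    simp only [← RCLike.star_def]
    simpa only [mul_assoc] using
      ((hf.hasDerivAt_iteratedDeriv hp x).fun_mul hg').const_mul ((-1 : 𝕜) ^ p)
  have hsum := HasDerivAt.fun_sum hterm
  rwa [sum_range_neg_one_pow_mul_telescope m (iteratedDeriv · f x)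
    (conj <| iteratedDeriv · g x), iteratedDeriv_zero, iteratedDeriv_zero] at hsum

theorem integral_mul_conj_iteratedDeriv_sub (hf : ContDiff ℝ m f) (hg : ContDiff ℝ m g)
    (a b : ℝ) :
    (∫ x in a..b, f x * conj (iteratedDeriv m g x))
      - (-1) ^ m * ∫ x in a..b, iteratedDeriv m f x * conj (g x)
      = bilinearConcomitant m f g b - bilinearConcomitant m f g a := by
  have hf_cont := hf.continuous
  have hg_cont := hg.continuous
  have hfm_cont := hf.continuous_iteratedDeriv' m
  have hgm_cont := hg.continuous_iteratedDeriv' m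
  have conj_cont := RCLike.continuous_conj (K := 𝕜)
  rw [← integral_const_mul, ← integral_sub (by apply Continuous.intervalIntegrable; fun_prop)
    (by apply Continuous.intervalIntegrable; fun_prop)]
  refine integral_eq_sub_of_hasDerivAt (fun x _ ↦ ?_)
    (by apply Continuous.intervalIntegrable; fun_prop)
  simpa only [mul_assoc] using hasDerivAt_bilinearConcomitant hf hg x

end Concomitant

open Complex in
theorem two_mul_im_integral_neg_I_pow_mul_iteratedDeriv_mul_conj {m : ℕ} {y : ℝ → ℂ}
    (hy : ContDiff ℝ m y) (a b : ℝ) :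
    (2 * (∫ x in a..b, (-I) ^ m * iteratedDeriv m y x * conj (y x)).im : ℂ)
      = I ^ (m + 1) * (bilinearConcomitant m y y b - bilinearConcomitant m y y a) := by
  set w := ∫ x in a..b, iteratedDeriv m y x * conj (y x)
  have hw : conj w - (-1) ^ m * w = bilinearConcomitant m y y b - bilinearConcomitant m y y a := by
    rw [← integral_mul_conj_iteratedDeriv_sub hy hy, ← intervalIntegral_conj]
    simp only [map_mul, conj_conj, mul_comm, w]
  have hint : ∫ x in a..b, (-I) ^ m * iteratedDeriv m y x * conj (y x) = (-I) ^ m * w := by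
    simp only [mul_assoc, integral_const_mul, w]
  have him (z : ℂ) : (2 * z.im : ℂ) = I * (conj z - z) := by
    rw [← neg_sub, sub_conj]
    push_cast
    linear_combination 2 * (z.im : ℂ) * I_sq
  rw [hint, ← hw, him, map_mul, map_pow, conj_neg_I, neg_pow I m]
  ring

-- The exponent is `m + 1` for `m = 2n - 1`; at `n = 0` the truncated `m` is `0` and both sides vanish.
theorem qK_iteratedDeriv_eq (n : ℕ) (y : ℝ → ℂ) (x : ℝ) :
    qK n (fun k ↦ iteratedDeriv k y x)
      = Complex.I ^ (2 * n - 1 + 1) * bilinearConcomitant (2 * n - 1) y y x := by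
  rcases n with _ | n
  · simp [qK, bilinearConcomitant]
  rw [show 2 * (n + 1) - 1 + 1 = 2 * (n + 1) by omega, pow_mul, Complex.I_sq, qK,
    bilinearConcomitant, ← Fin.sum_univ_eq_sum_range]
  simp only [Fin.val_rev]

theorem stmt2_general (n : ℕ) (y : ℝ → ℂ) (hy : ContDiff ℝ (2 * n - 1) y) :
    (2 * (∫ x in (0:ℝ)..1,
        (-Complex.I) ^ (2 * n - 1) * iteratedDeriv (2 * n - 1) y x * (starRingEnd ℂ) (y x)).im : ℂ)
      = qK n (fun k => iteratedDeriv (k : ℕ) y 1)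
        - qK n (fun k => iteratedDeriv (k : ℕ) y 0) := by
  have hy' : ContDiff ℝ (2 * n - 1 : ℕ) y := by exact_mod_cast hy
  rw [two_mul_im_integral_neg_I_pow_mul_iteratedDeriv_mul_conj hy', qK_iteratedDeriv_eq,
    qK_iteratedDeriv_eq, mul_sub]

/-- for `m = 2n−1` and `y` (2n−1)-times continuously differentiable,
`2·Im(∫₀¹ (−i)^{2n−1} y^{(2n−1)}·conj(y)) = q_K(ŷ₁) − q_K(ŷ₀)`. -/
theorem stmt2 (n : ℕ) (hn : 1 ≤ n) (y : ℝ → ℂ) (hy : ContDiff ℝ (2 * n - 1) y) :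
    (2 * (∫ x in (0:ℝ)..1,
        (-Complex.I) ^ (2 * n - 1) * iteratedDeriv (2 * n - 1) y x * (starRingEnd ℂ) (y x)).im : ℂ)
      = qK n (fun k => iteratedDeriv (k : ℕ) y 1)
        - qK n (fun k => iteratedDeriv (k : ℕ) y 0) :=
  stmt2_general n y hy
end

section
/- Let N ≥ 1 and let M be a 2N×2N complex Hermitian matrix with M² = I and trace(M) = 0 (so M has eigenvalues 1 and −1, each of multiplicity N). Let 𝔑 ⊆ ℂ^{2N} be a linear subspace of dimension N such that ⟨Mx, x⟩ ≥ 0 for every x ∈ 𝔑. Then ⟨My, y⟩ ≤ 0 for every y in the orthogonal complement 𝔑^⊥ of 𝔑. -/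
/-!
Write `M = P - Q` with `P = (1 + M) / 2` and `Q = 1 - P` complementary orthogonal projections,
both of rank `N` since `trace M = 0`; then `⟨Mx, x⟩ = ‖Px‖² - ‖Qx‖²`. On `𝔑` we have
`‖Qx‖ ≤ ‖Px‖`, so `P` is injective on `𝔑` and, counting dimensions, maps `𝔑` onto `range P`.
For `y ⊥ 𝔑` pick `x ∈ 𝔑` with `Px = Py`: then `0 = ⟨x, y⟩ = ‖Py‖² + ⟨Qx, Qy⟩`, whence
`‖Py‖² ≤ ‖Qx‖ ‖Qy‖ ≤ ‖Py‖ ‖Qy‖`, i.e. `‖Py‖ ≤ ‖Qy‖`.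
-/

open Module LinearMap RCLike

section

variable {𝕜 E : Type*} [RCLike 𝕜] [NormedAddCommGroup E] [InnerProductSpace 𝕜 E]

local notation "⟪" x ", " y "⟫" => inner 𝕜 x y

namespace LinearMap.IsSymmetric

variable {P : E →ₗ[𝕜] E} (hP : P.IsSymmetric) (hPP : IsIdempotentElem P)
include hP hPP

theorem inner_map_map_of_isIdempotentElem (x y : E) : ⟪P x, P y⟫ = ⟪x, P y⟫ := by
  rw [hP, ← Module.End.mul_apply, hPP.eq]

theorem re_inner_map_self_of_isIdempotentElem (x : E) : re ⟪P x, x⟫ = ‖P x‖ ^ 2 := by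
  rw [hP, ← hP.inner_map_map_of_isIdempotentElem hPP, inner_self_eq_norm_sq]

theorem inner_eq_inner_map_add_inner_one_sub_map (x y : E) :
    ⟪x, y⟫ = ⟪P x, P y⟫ + ⟪(1 - P) x, (1 - P) y⟫ := by
  rw [hP.inner_map_map_of_isIdempotentElem hPP,
    (IsSymmetric.one.sub hP).inner_map_map_of_isIdempotentElem hPP.one_sub, ← inner_add_right,
    sub_apply, Module.End.one_apply, add_sub_cancel]

end LinearMap.IsSymmetric

theorem LinearMap.injective_domRestrict_of_norm_one_sub_map_le {P : E →ₗ[𝕜] E}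
    {W : Submodule 𝕜 E} (hW : ∀ x ∈ W, ‖(1 - P) x‖ ≤ ‖P x‖) :
    Function.Injective (P.domRestrict W) := by
  refine (injective_iff_map_eq_zero _).2 fun ⟨x, hx⟩ hPx ↦ ?_
  replace hPx : P x = 0 := hPx
  have hQx : (1 - P) x = 0 := norm_le_zero_iff.1 <| by simpa [hPx] using hW x hx
  ext
  simpa [hPx] using hQx

theorem LinearMap.map_eq_range_of_injective_domRestrict [FiniteDimensional 𝕜 E]
    {P : E →ₗ[𝕜] E} {W : Submodule 𝕜 E} (hinj : Function.Injective (P.domRestrict W))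
    (hW : finrank 𝕜 W = finrank 𝕜 (range P)) : W.map P = range P := by
  refine Submodule.eq_of_le_of_finrank_eq map_le_range ?_
  rw [← range_domRestrict, finrank_range_of_inj hinj, hW]

theorem LinearMap.IsSymmetric.norm_map_le_norm_one_sub_map_of_mem_orthogonal
    [FiniteDimensional 𝕜 E] {P : E →ₗ[𝕜] E} (hP : P.IsSymmetric) (hPP : IsIdempotentElem P)
    {W : Submodule 𝕜 E} (hW : finrank 𝕜 W = finrank 𝕜 (range P))
    (hW_pos : ∀ x ∈ W, ‖(1 - P) x‖ ≤ ‖P x‖) {y : E} (hy : y ∈ Wᗮ) :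
    ‖P y‖ ≤ ‖(1 - P) y‖ := by
  have hmap := map_eq_range_of_injective_domRestrict
    (injective_domRestrict_of_norm_one_sub_map_le hW_pos) hW
  obtain ⟨x, hxW, hxy⟩ : P y ∈ W.map P := hmap ▸ mem_range_self P y
  have horth : ‖P y‖ ^ 2 = -re ⟪(1 - P) x, (1 - P) y⟫ := by
    have h := hP.inner_eq_inner_map_add_inner_one_sub_map hPP x y
    rw [Submodule.inner_right_of_mem_orthogonal hxW hy, hxy] at h
    rw [← inner_self_eq_norm_sq (𝕜 := 𝕜), eq_neg_iff_add_eq_zero, ← map_add, ← h, map_zero]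
  have hsq : ‖P y‖ ^ 2 ≤ ‖P y‖ * ‖(1 - P) y‖ := calc
    ‖P y‖ ^ 2 ≤ ‖(1 - P) x‖ * ‖(1 - P) y‖ :=
      horth ▸ (neg_le_abs _).trans ((abs_re_le_norm _).trans (norm_inner_le_norm _ _))
    _ ≤ ‖P y‖ * ‖(1 - P) y‖ := by
      gcongr
      exact hxy ▸ hW_pos x hxW
  nlinarith [norm_nonneg (P y), norm_nonneg ((1 - P) y)]

theorem isIdempotentElem_inv_two_smul_one_add {K A : Type*} [Field K] [CharZero K] [Ring A]
    [Algebra K A] {t : A} (ht : t * t = 1) : IsIdempotentElem ((2⁻¹ : K) • (1 + t)) := by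
  have hsq : (1 + t) * (1 + t) = (2 : K) • (1 + t) := by
    simp only [add_mul, mul_add, ht, one_mul, mul_one, two_smul]
    abel
  rw [IsIdempotentElem, smul_mul_smul_comm, hsq, smul_smul]
  norm_num

theorem two_mul_finrank_range_inv_two_smul_one_add [FiniteDimensional 𝕜 E] {T : E →ₗ[𝕜] E}
    (hT2 : T * T = 1) (htr : trace 𝕜 E T = 0) :
    2 * finrank 𝕜 (range ((2⁻¹ : 𝕜) • (1 + T))) = finrank 𝕜 E := by
  have h := (isIdempotentElem_inv_two_smul_one_add (K := 𝕜) hT2).isProj_range.trace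
  rw [map_smul, map_add, htr, trace_one, add_zero, smul_eq_mul] at h
  apply Nat.cast_injective (R := 𝕜)
  push_cast
  rw [← h]
  ring

theorem LinearMap.IsSymmetric.re_inner_apply_self_nonpos_of_mem_orthogonal
    [FiniteDimensional 𝕜 E] {T : E →ₗ[𝕜] E} (hT : T.IsSymmetric) (hT2 : T * T = 1)
    (htr : trace 𝕜 E T = 0) {W : Submodule 𝕜 E} (hW : 2 * finrank 𝕜 W = finrank 𝕜 E)
    (hW_pos : ∀ x ∈ W, 0 ≤ re ⟪T x, x⟫) {y : E} (hy : y ∈ Wᗮ) : re ⟪T y, y⟫ ≤ 0 := by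
  set P := (2⁻¹ : 𝕜) • (1 + T)
  have hPP : IsIdempotentElem P := isIdempotentElem_inv_two_smul_one_add hT2
  have hP : P.IsSymmetric := (IsSymmetric.one.add hT).smul (by simp [conj_ofNat])
  have hform (x : E) : re ⟪T x, x⟫ = ‖P x‖ ^ 2 - ‖(1 - P) x‖ ^ 2 := by
    have hTP : T = P - (1 - P) := by simp only [P]; module
    rw [← hP.re_inner_map_self_of_isIdempotentElem hPP,
      ← (IsSymmetric.one.sub hP).re_inner_map_self_of_isIdempotentElem hPP.one_sub,
      ← map_sub, ← inner_sub_left, ← sub_apply, ← hTP]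
  have hWP : finrank 𝕜 W = finrank 𝕜 (range P) := by
    have : 2 * finrank 𝕜 (range P) = finrank 𝕜 E :=
      two_mul_finrank_range_inv_two_smul_one_add hT2 htr
    omega
  have hPy := hP.norm_map_le_norm_one_sub_map_of_mem_orthogonal hPP hWP (fun x hx ↦
    (pow_le_pow_iff_left₀ (norm_nonneg _) (norm_nonneg _) two_ne_zero).1
      (by linarith [hform x ▸ hW_pos x hx])) hy
  linarith [hform y, pow_le_pow_left₀ (norm_nonneg _) hPy 2]

theorem Matrix.trace_toEuclideanLin {n : Type*} [Fintype n] [DecidableEq n]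
    (A : Matrix n n 𝕜) : LinearMap.trace 𝕜 _ (Matrix.toEuclideanLin A) = A.trace := by
  rw [Matrix.toEuclideanLin_eq_toLin_orthonormal, Matrix.trace_toLin_eq]

end

open Matrix ComplexOrder

theorem stmt3_general (N : ℕ) (M : Matrix (Fin (2 * N)) (Fin (2 * N)) ℂ)
    (hherm : M.IsHermitian) (hsq : M * M = 1) (htr : M.trace = 0)
    (𝔑 : Submodule ℂ (Fin (2 * N) → ℂ)) (hdim : Module.finrank ℂ 𝔑 = N)
    (hpos : ∀ x ∈ 𝔑, 0 ≤ star x ⬝ᵥ M.mulVec x) :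
    ∀ y : Fin (2 * N) → ℂ, (∀ x ∈ 𝔑, star x ⬝ᵥ y = 0) →
      star y ⬝ᵥ M.mulVec y ≤ 0 := by
  intro y hy
  set T := toEuclideanLin M with hTdef
  have hT : T.IsSymmetric := isSymmetric_toEuclideanLin_iff.2 hherm
  have hquad (x : Fin (2 * N) → ℂ) :
      inner ℂ (T (WithLp.toLp 2 x)) (WithLp.toLp 2 x) = star x ⬝ᵥ M *ᵥ x := by
    rw [hT]
    exact dotProduct_comm _ _
  have hT2 : T * T = 1 := by
    rw [hTdef, Module.End.mul_eq_comp, ← toLpLin_mul_same, hsq, toLpLin_one]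
    rfl
  have hTtr : trace ℂ _ T = 0 := by
    rw [hTdef, trace_toEuclideanLin, htr]
  set W := 𝔑.map (WithLp.linearEquiv 2 ℂ (Fin (2 * N) → ℂ)).symm.toLinearMap
  have hW : 2 * finrank ℂ W = finrank ℂ (EuclideanSpace ℂ (Fin (2 * N))) := by
    rw [LinearEquiv.finrank_map_eq, hdim, finrank_euclideanSpace_fin]
  have hW_pos : ∀ x ∈ W, 0 ≤ re (inner ℂ (T x) x) := by
    rintro _ ⟨x, hx, rfl⟩
    simpa [hquad] using (Complex.le_def.1 (hpos x hx)).1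
  have hyW : WithLp.toLp 2 y ∈ Wᗮ := by
    rintro _ ⟨x, hx, rfl⟩
    exact (dotProduct_comm _ _).trans (hy x hx)
  refine Complex.le_def.2 ⟨?_, hherm.im_star_dotProduct_mulVec_self y⟩
  simpa [hquad] using hT.re_inner_apply_self_nonpos_of_mem_orthogonal hT2 hTtr hW hW_pos hyW

/-- if `M` is a `2N×2N` Hermitian matrix with `M² = I` and `trace M = 0`,
and `𝔑` is an `N`-dimensional subspace of `ℂ^{2N}` with `⟨Mx, x⟩ ≥ 0` for all `x ∈ 𝔑`,
then `⟨My, y⟩ ≤ 0` for every `y` orthogonal to `𝔑`.  (Inequalities between complex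
numbers are taken in the complex partial order, which forces the values to be real.) -/
theorem stmt3 (N : ℕ) (hN : 1 ≤ N) (M : Matrix (Fin (2 * N)) (Fin (2 * N)) ℂ)
    (hherm : M.IsHermitian) (hsq : M * M = 1) (htr : M.trace = 0)
    (𝔑 : Submodule ℂ (Fin (2 * N) → ℂ)) (hdim : Module.finrank ℂ 𝔑 = N)
    (hpos : ∀ x ∈ 𝔑, 0 ≤ star x ⬝ᵥ M.mulVec x) :
    ∀ y : Fin (2 * N) → ℂ, (∀ x ∈ 𝔑, star x ⬝ᵥ y = 0) →
      star y ⬝ᵥ M.mulVec y ≤ 0 :=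
  stmt3_general N M hherm hsq htr 𝔑 hdim hpos
end

section
/- Let N ≥ 1 and let 𝔑 ⊆ ℂ^N × ℂ^N be a linear subspace of dimension N such that ‖x₊‖ ≥ ‖x₋‖ for every pair (x₋, x₊) ∈ 𝔑. Then there exists a linear map S : ℂ^N → ℂ^N with ‖Sx‖ ≤ ‖x‖ for all x ∈ ℂ^N such that 𝔑 = { (Sx, x) : x ∈ ℂ^N }; that is, 𝔑 is the graph of a linear contraction from the second factor to the first. -/
/-- an `N`-dimensional subspace `𝔑 ⊆ ℂ^N × ℂ^N` on which `‖x₊‖ ≥ ‖x₋‖`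
(for pairs `(x₋, x₊)`) is the graph of a linear contraction from the second factor to
the first: `𝔑 = {(Sx, x) : x ∈ ℂ^N}` for some linear `S` with `‖Sx‖ ≤ ‖x‖`. -/
theorem stmt4 (N : ℕ) (hN : 1 ≤ N)
    (𝔑 : Submodule ℂ (EuclideanSpace ℂ (Fin N) × EuclideanSpace ℂ (Fin N)))
    (hdim : Module.finrank ℂ 𝔑 = N)
    (hineq : ∀ p ∈ 𝔑, ‖p.1‖ ≤ ‖p.2‖) :
    ∃ S : EuclideanSpace ℂ (Fin N) →ₗ[ℂ] EuclideanSpace ℂ (Fin N),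
      (∀ x, ‖S x‖ ≤ ‖x‖) ∧
      (𝔑 : Set (EuclideanSpace ℂ (Fin N) × EuclideanSpace ℂ (Fin N)))
        = Set.range (fun x => (S x, x)) := by
  set E := EuclideanSpace ℂ (Fin N)
  set p2 : 𝔑 →ₗ[ℂ] E := (LinearMap.snd ℂ E E).comp 𝔑.subtype with hp2
  have hinj : Function.Injective p2 := by
    rw [← LinearMap.ker_eq_bot]
    rw [LinearMap.ker_eq_bot']
    rintro ⟨p, hp⟩ h
    have h2 : p.2 = 0 := h
    have := hineq p hp
    rw [h2, norm_zero] at this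
    have h1 : p.1 = 0 := norm_le_zero_iff.mp this
    have : p = 0 := Prod.ext h1 h2
    exact Subtype.ext this
  have hsurj : Function.Surjective p2 := by
    rw [← LinearMap.range_eq_top]
    apply Submodule.eq_top_of_finrank_eq
    rw [LinearMap.finrank_range_of_inj hinj, hdim, finrank_euclideanSpace, Fintype.card_fin]
  let e : 𝔑 ≃ₗ[ℂ] E := LinearEquiv.ofBijective p2 ⟨hinj, hsurj⟩
  refine ⟨((LinearMap.fst ℂ E E).comp 𝔑.subtype).comp (e.symm : E →ₗ[ℂ] 𝔑), ?_, ?_⟩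
  · intro x
    have hmem := (e.symm x).2
    have h2 : ((e.symm x : 𝔑) : E × E).2 = x := e.apply_symm_apply x
    have := hineq _ hmem
    simpa [h2] using this
  · ext p
    constructor
    · intro hp
      refine ⟨p.2, ?_⟩
      have he : e.symm p.2 = ⟨p, hp⟩ := by
        apply e.injective
        rw [e.apply_symm_apply]
        rfl
      simp only [LinearMap.comp_apply, LinearEquiv.coe_coe, he]
      exact Prod.ext rfl rfl
    · rintro ⟨x, rfl⟩
      have hmem := (e.symm x).2
      have h2 : ((e.symm x : 𝔑) : E × E).2 = x := e.apply_symm_apply x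
      simp only [LinearMap.comp_apply, LinearEquiv.coe_coe, SetLike.mem_coe]
      have heq : (( ((LinearMap.fst ℂ E E).comp 𝔑.subtype) (e.symm x)), x)
          = ((e.symm x : 𝔑) : E × E) := Prod.ext rfl h2.symm
      exact heq ▸ hmem
end

section
/- Let m ≥ 1 and let V : ℂ^m → ℂ^m be a linear map with ‖Vx‖ ≤ ‖x‖ for all x ∈ ℂ^m. If a, b ∈ ℂ^m satisfy (V − I)a + i(V + I)b = 0, then Im⟨a, b⟩ ≥ 0. -/
/-!
The boundary condition says exactly `V (a + i b) = a - i b`, so the contraction property gives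
`‖a - i b‖ ≤ ‖a + i b‖`, and by polarization `4 Im⟨a, b⟩ = ‖a + i b‖² - ‖a - i b‖²`.
Mathlib's inner product is conjugate-linear in the first argument, so `⟨a, b⟩` is `inner ℂ b a`.
-/

open Complex

variable {E : Type*} [NormedAddCommGroup E] [InnerProductSpace ℂ E]

theorem im_inner_nonneg_of_norm_sub_I_smul_le {a b : E} (h : ‖a - I • b‖ ≤ ‖a + I • b‖) :
    0 ≤ (inner ℂ b a).im := by
  have hpol := im_inner_eq_norm_sub_i_smul_mul_self_sub_norm_add_i_smul_mul_self_div_four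
    (𝕜 := ℂ) a b
  rw [← inner_conj_symm, conj_im]
  simp only [RCLike.im_to_complex, RCLike.I_to_complex] at hpol
  nlinarith [norm_nonneg (a - I • b)]

theorem LinearMap.apply_add_I_smul_eq_sub_I_smul {M : Type*} [AddCommGroup M] [Module ℂ M]
    (V : M →ₗ[ℂ] M) {a b : M} (hab : (V a - a) + I • (V b + b) = 0) :
    V (a + I • b) = a - I • b := by
  rw [← sub_eq_zero, ← hab, map_add, map_smul, smul_add]
  abel

theorem stmt9_general (m : ℕ)
    (V : EuclideanSpace ℂ (Fin m) →ₗ[ℂ] EuclideanSpace ℂ (Fin m))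
    (hV : ∀ x, ‖V x‖ ≤ ‖x‖)
    (a b : EuclideanSpace ℂ (Fin m))
    (hab : (V a - a) + Complex.I • (V b + b) = 0) :
    0 ≤ (∑ k, a k * (starRingEnd ℂ) (b k)).im := by
  have hsum : ∑ k, a k * (starRingEnd ℂ) (b k) = inner ℂ b a := by
    simp [PiLp.inner_apply]
  rw [hsum]
  apply im_inner_nonneg_of_norm_sub_I_smul_le
  simpa [V.apply_add_I_smul_eq_sub_I_smul hab] using hV (a + I • b)

/-- if `V` is a linear contraction of `ℂ^m` and
`(V − I)a + i(V + I)b = 0`, then `Im⟨a, b⟩ ≥ 0`, where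
`⟨a,b⟩ = Σ_k a_k·conj(b_k)`. -/
theorem stmt9 (m : ℕ) (hm : 1 ≤ m)
    (V : EuclideanSpace ℂ (Fin m) →ₗ[ℂ] EuclideanSpace ℂ (Fin m))
    (hV : ∀ x, ‖V x‖ ≤ ‖x‖)
    (a b : EuclideanSpace ℂ (Fin m))
    (hab : (V a - a) + Complex.I • (V b + b) = 0) :
    0 ≤ (∑ k, a k * (starRingEnd ℂ) (b k)).im :=
  stmt9_general m V hV a b hab
end

section
/- Let m ≥ 1 and let D ⊆ ℂ^m × ℂ^m be a linear subspace such that Im⟨a, b⟩ ≥ 0 for every (a, b) ∈ D. Then there exists a linear map V : ℂ^m → ℂ^m with ‖Vx‖ ≤ ‖x‖ for all x ∈ ℂ^m such that D ⊆ { (a, b) ∈ ℂ^m × ℂ^m : (V − I)a + i(V + I)b = 0 }. Moreover, if dim D = m, then D = { (a, b) : (V − I)a + i(V + I)b = 0 }. -/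
/-!
In the Cayley coordinates `c = a + i b`, `d = a - i b` one has
`‖c‖² - ‖d‖² = 4 Im⟨a, b⟩`, so on a dissipative subspace `D` the map `c ↦ d` is a well-defined
contraction from the image of `D` in the `c`-coordinate. Extending it by zero on the orthogonal
complement gives `V`, and `(V - I)a + i(V + I)b = V c - d`, so `D` lies in the graph of `V` read in
Cayley coordinates. That graph has dimension `m`, which gives equality when `dim D = m`.
-/

open Complex Module

section Extension

variable {𝕜 M E F : Type*} [RCLike 𝕜] [AddCommGroup M] [Module 𝕜 M]
  [NormedAddCommGroup E] [InnerProductSpace 𝕜 E] [FiniteDimensional 𝕜 E]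
  [NormedAddCommGroup F] [NormedSpace 𝕜 F]

theorem LinearMap.exists_contraction_comp_eq (f : M →ₗ[𝕜] E) (g : M →ₗ[𝕜] F)
    (hgf : ∀ x, ‖g x‖ ≤ ‖f x‖) :
    ∃ V : E →ₗ[𝕜] F, (∀ y, ‖V y‖ ≤ ‖y‖) ∧ V ∘ₗ f = g := by
  have hker : LinearMap.ker f ≤ LinearMap.ker g := fun x hx ↦ by
    simpa [LinearMap.mem_ker.mp hx] using hgf x
  set K := LinearMap.range f
  let V₀ : K →ₗ[𝕜] F :=
    (LinearMap.ker f).liftQ g hker ∘ₗ f.quotKerEquivRange.symm.toLinearMap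
  have hV₀ : ∀ x, V₀ ⟨f x, LinearMap.mem_range_self f x⟩ = g x := fun x ↦ by
    change (LinearMap.ker f).liftQ g hker (f.quotKerEquivRange.symm _) = g x
    rw [f.quotKerEquivRange_symm_apply_image x]
    rfl
  refine ⟨V₀ ∘ₗ K.orthogonalProjectionOnto.toLinearMap, fun y ↦ ?_, ?_⟩
  · obtain ⟨x, hx⟩ := (K.orthogonalProjectionOnto y).2
    have hPy : K.orthogonalProjectionOnto y = ⟨f x, LinearMap.mem_range_self f x⟩ :=
      Subtype.ext hx.symm
    calc ‖V₀ (K.orthogonalProjectionOnto y)‖ = ‖g x‖ := by rw [hPy, hV₀]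
      _ ≤ ‖f x‖ := hgf x
      _ = ‖K.orthogonalProjectionOnto y‖ := by rw [hPy]; rfl
      _ ≤ ‖y‖ := K.norm_orthogonalProjectionOnto_apply_le y
  · ext x
    simp [K.orthogonalProjectionOnto_mem_subspace_eq_self ⟨f x, LinearMap.mem_range_self f x⟩, hV₀]

end Extension

section Cayley

variable {E : Type*} [NormedAddCommGroup E] [InnerProductSpace ℂ E]

noncomputable def cayleyCoords : (E × E) ≃ₗ[ℂ] (E × E) where
  toFun p := (p.1 + I • p.2, p.1 - I • p.2)
  invFun q := ((1 / 2 : ℂ) • (q.1 + q.2), (-I / 2) • (q.1 - q.2))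
  map_add' p q := by ext <;> simp only [Prod.fst_add, Prod.snd_add] <;> module
  map_smul' c p := by
    ext <;> simp only [Prod.smul_fst, Prod.smul_snd, RingHom.id_apply] <;> module
  left_inv p := by ext <;> dsimp only <;> match_scalars <;> grind [I_mul_I]
  right_inv q := by ext <;> dsimp only <;> match_scalars <;> grind [I_mul_I]

@[simp]
theorem cayleyCoords_apply (p : E × E) :
    cayleyCoords p = (p.1 + I • p.2, p.1 - I • p.2) :=
  rfl

theorem norm_add_I_smul_sq_sub_norm_sub_I_smul_sq (a b : E) :
    ‖a + I • b‖ ^ 2 - ‖a - I • b‖ ^ 2 = 4 * (inner ℂ b a).im := by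
  rw [@norm_add_sq ℂ, @norm_sub_sq ℂ, inner_smul_right, ← inner_conj_symm a b]
  simp only [RCLike.re_to_complex, mul_re, I_re, I_im, conj_re, conj_im]
  ring

theorem norm_sub_I_smul_le_norm_add_I_smul {a b : E} (h : 0 ≤ (inner ℂ b a).im) :
    ‖a - I • b‖ ≤ ‖a + I • b‖ := by
  have := norm_add_I_smul_sq_sub_norm_sub_I_smul_sq a b
  exact (sq_le_sq₀ (norm_nonneg _) (norm_nonneg _)).mp (by linarith)

noncomputable def boundarySubspace (V : E →ₗ[ℂ] E) : Submodule ℂ (E × E) :=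
  V.graph.comap cayleyCoords.toLinearMap

theorem mem_boundarySubspace {V : E →ₗ[ℂ] E} {p : E × E} :
    p ∈ boundarySubspace V ↔ (V p.1 - p.1) + I • (V p.2 + p.2) = 0 := by
  simp only [boundarySubspace, Submodule.mem_comap, LinearEquiv.coe_coe, cayleyCoords_apply,
    LinearMap.mem_graph_iff, map_add, map_smul]
  constructor <;> intro h <;> linear_combination (norm := module) -h

theorem coe_boundarySubspace (V : E →ₗ[ℂ] E) :
    (boundarySubspace V : Set (E × E)) = {p | (V p.1 - p.1) + I • (V p.2 + p.2) = 0} :=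
  Set.ext fun _ ↦ mem_boundarySubspace

theorem finrank_boundarySubspace (V : E →ₗ[ℂ] E) :
    finrank ℂ (boundarySubspace V) = finrank ℂ E := by
  rw [boundarySubspace, Submodule.comap_equiv_eq_map_symm, LinearEquiv.finrank_map_eq,
    LinearMap.graph_eq_range_prod, LinearMap.finrank_range_of_inj]
  exact fun x y h ↦ congr_arg Prod.fst h

theorem exists_contraction_le_boundarySubspace [FiniteDimensional ℂ E] (D : Submodule ℂ (E × E))
    (hD : ∀ p ∈ D, 0 ≤ (inner ℂ p.2 p.1).im) :
    ∃ V : E →ₗ[ℂ] E, (∀ x, ‖V x‖ ≤ ‖x‖) ∧ D ≤ boundarySubspace V := by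
  let C := cayleyCoords.toLinearMap ∘ₗ D.subtype
  obtain ⟨V, hV, hVC⟩ := (LinearMap.fst ℂ E E ∘ₗ C).exists_contraction_comp_eq
    (LinearMap.snd ℂ E E ∘ₗ C) fun p ↦ norm_sub_I_smul_le_norm_add_I_smul (hD p p.2)
  exact ⟨V, hV, fun p hp ↦ (LinearMap.congr_fun hVC ⟨p, hp⟩).symm⟩

end Cayley

theorem stmt10_general (m : ℕ)
    (D : Submodule ℂ (EuclideanSpace ℂ (Fin m) × EuclideanSpace ℂ (Fin m)))
    (hdiss : ∀ p ∈ D, 0 ≤ (∑ k, p.1 k * (starRingEnd ℂ) (p.2 k)).im) :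
    ∃ V : EuclideanSpace ℂ (Fin m) →ₗ[ℂ] EuclideanSpace ℂ (Fin m),
      (∀ x, ‖V x‖ ≤ ‖x‖) ∧
      (D : Set (EuclideanSpace ℂ (Fin m) × EuclideanSpace ℂ (Fin m)))
        ⊆ {p | (V p.1 - p.1) + Complex.I • (V p.2 + p.2) = 0} ∧
      (Module.finrank ℂ D = m →
        (D : Set (EuclideanSpace ℂ (Fin m) × EuclideanSpace ℂ (Fin m)))
          = {p | (V p.1 - p.1) + Complex.I • (V p.2 + p.2) = 0}) := by
  have hD : ∀ p ∈ D, 0 ≤ (inner ℂ p.2 p.1).im := fun p hp ↦ by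
    simpa [PiLp.inner_apply] using hdiss p hp
  obtain ⟨V, hV, hle⟩ := exists_contraction_le_boundarySubspace D hD
  refine ⟨V, hV, ?_, fun hfin ↦ ?_⟩ <;> rw [← coe_boundarySubspace]
  · exact hle
  · rw [Submodule.eq_of_le_of_finrank_le hle]
    rw [finrank_boundarySubspace, finrank_euclideanSpace_fin, hfin]

/-- if `D ⊆ ℂ^m × ℂ^m` is a subspace with `Im⟨a, b⟩ ≥ 0` for every
`(a,b) ∈ D` (where `⟨a,b⟩ = Σ_k a_k·conj(b_k)`), then there is a linear contraction
`V` of `ℂ^m` with `D ⊆ {(a,b) : (V − I)a + i(V + I)b = 0}`, with equality when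
`dim D = m`. -/
theorem stmt10 (m : ℕ) (hm : 1 ≤ m)
    (D : Submodule ℂ (EuclideanSpace ℂ (Fin m) × EuclideanSpace ℂ (Fin m)))
    (hdiss : ∀ p ∈ D, 0 ≤ (∑ k, p.1 k * (starRingEnd ℂ) (p.2 k)).im) :
    ∃ V : EuclideanSpace ℂ (Fin m) →ₗ[ℂ] EuclideanSpace ℂ (Fin m),
      (∀ x, ‖V x‖ ≤ ‖x‖) ∧
      (D : Set (EuclideanSpace ℂ (Fin m) × EuclideanSpace ℂ (Fin m)))
        ⊆ {p | (V p.1 - p.1) + Complex.I • (V p.2 + p.2) = 0} ∧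
      (Module.finrank ℂ D = m →
        (D : Set (EuclideanSpace ℂ (Fin m) × EuclideanSpace ℂ (Fin m)))
          = {p | (V p.1 - p.1) + Complex.I • (V p.2 + p.2) = 0}) :=
  stmt10_general m D hdiss
end

section
/- Let n ≥ 1 and let y : [0,1] → ℂ be 2n times continuously differentiable. Then Im(∫₀¹ (−i)^{2n} y^{(2n)}(x)·conj(y(x)) dx) = Im( Σ_{k=1}^{2n} (y^∨)_k · conj((y^∧)_k) ). -/
/-- The vector `y^∧ = (y(0), …, y^{(n−1)}(0), y(1), …, y^{(n−1)}(1)) ∈ ℂ^{2n}`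
(0-indexed components). -/
noncomputable def ywedge (n : ℕ) (y : ℝ → ℂ) : Fin (2 * n) → ℂ := fun k =>
  if (k : ℕ) < n then iteratedDeriv (k : ℕ) y 0 else iteratedDeriv ((k : ℕ) - n) y 1

/-- The vector `y^∨` of quasi-derivatives: with 0-indexed component `k`,
`(y^∨)_k = (−1)^{n−1−k}·y^{(2n−1−k)}(0)` for `k < n` and
`(y^∨)_{n+k} = −(−1)^{n−1−k}·y^{(2n−1−k)}(1)` for `k < n`. -/
noncomputable def yvee (n : ℕ) (y : ℝ → ℂ) : Fin (2 * n) → ℂ := fun k =>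
  if (k : ℕ) < n then
    (-1 : ℂ) ^ (n - 1 - (k : ℕ)) * iteratedDeriv (2 * n - 1 - (k : ℕ)) y 0
  else
    -((-1 : ℂ) ^ (n - 1 - ((k : ℕ) - n)) * iteratedDeriv (2 * n - 1 - ((k : ℕ) - n)) y 1)

/-- `Im(∫₀¹ (−i)^{2n} y^{(2n)}·conj(y)) = Im(Σ_k (y^∨)_k·conj((y^∧)_k))`. -/
theorem stmt11 (n : ℕ) (hn : 1 ≤ n) (y : ℝ → ℂ) (hy : ContDiff ℝ (2 * n) y) :
    (∫ x in (0:ℝ)..1,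
        (-Complex.I) ^ (2 * n) * iteratedDeriv (2 * n) y x * (starRingEnd ℂ) (y x)).im
      = (∑ k : Fin (2 * n), yvee n y k * (starRingEnd ℂ) (ywedge n y k)).im := by
  -- basic facts about derivatives
  have hd : ∀ k, k < 2*n → ∀ x : ℝ, HasDerivAt (iteratedDeriv k y)
      (iteratedDeriv (k+1) y x) x := by
    intro k hk x
    have h1 : Differentiable ℝ (iteratedDeriv k y) :=
      hy.differentiable_iteratedDeriv k (by exact_mod_cast hk)
    have h2 := (h1 x).hasDerivAt
    rwa [iteratedDeriv_succ]
  have hc : ∀ k, k ≤ 2*n → Continuous (iteratedDeriv k y) := by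
    intro k hk
    exact hy.continuous_iteratedDeriv k (by exact_mod_cast hk)
  have hds : ∀ k, k < 2*n → ∀ x : ℝ,
      HasDerivAt (fun t => (starRingEnd ℂ) (iteratedDeriv k y t))
        ((starRingEnd ℂ) (iteratedDeriv (k+1) y x)) x := by
    intro k hk x
    simp only [starRingEnd_apply]
    exact (hd k hk x).star
  have hcs : ∀ k, k ≤ 2*n → Continuous (fun t => (starRingEnd ℂ) (iteratedDeriv k y t)) := by
    intro k hk
    simp only [starRingEnd_apply]
    exact (hc k hk).star
  -- iterated integration by parts
  have key : ∀ m, m ≤ n →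
      (∫ x in (0:ℝ)..1, iteratedDeriv (2*n) y x * (starRingEnd ℂ) (y x))
      = (∑ j ∈ Finset.range m, (-1:ℂ)^j *
          (iteratedDeriv (2*n-1-j) y 1 * (starRingEnd ℂ) (iteratedDeriv j y 1)
            - iteratedDeriv (2*n-1-j) y 0 * (starRingEnd ℂ) (iteratedDeriv j y 0)))
        + (-1:ℂ)^m * ∫ x in (0:ℝ)..1,
            iteratedDeriv (2*n-m) y x * (starRingEnd ℂ) (iteratedDeriv m y x) := by
    intro m
    induction m with
    | zero => intro _; simp
    | succ m ih =>
      intro hm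
      have hm' : m ≤ n := by omega
      have hIBP := intervalIntegral.integral_mul_deriv_eq_deriv_mul
        (a := (0:ℝ)) (b := 1)
        (u := fun t => (starRingEnd ℂ) (iteratedDeriv m y t))
        (v := iteratedDeriv (2*n-m-1) y)
        (u' := fun t => (starRingEnd ℂ) (iteratedDeriv (m+1) y t))
        (v' := iteratedDeriv (2*n-m) y)
        (fun x _ => hds m (by omega) x)
        (fun x _ => by
          have e : 2*n-m-1+1 = 2*n-m := by omega
          rw [← e]; exact hd (2*n-m-1) (by omega) x)
        ((hcs (m+1) (by omega)).intervalIntegrable 0 1)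
        ((hc (2*n-m) (by omega)).intervalIntegrable 0 1)
      have hJ : (∫ x in (0:ℝ)..1,
            iteratedDeriv (2*n-m) y x * (starRingEnd ℂ) (iteratedDeriv m y x))
          = (starRingEnd ℂ) (iteratedDeriv m y 1) * iteratedDeriv (2*n-m-1) y 1
            - (starRingEnd ℂ) (iteratedDeriv m y 0) * iteratedDeriv (2*n-m-1) y 0
            - ∫ x in (0:ℝ)..1,
                iteratedDeriv (2*n-(m+1)) y x * (starRingEnd ℂ) (iteratedDeriv (m+1) y x) := by
        have e3 : 2*n - (m+1) = 2*n - m - 1 := by omega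
        rw [e3]
        have h2 : (∫ x in (0:ℝ)..1,
              iteratedDeriv (2*n-m) y x * (starRingEnd ℂ) (iteratedDeriv m y x))
            = ∫ x in (0:ℝ)..1,
                (starRingEnd ℂ) (iteratedDeriv m y x) * iteratedDeriv (2*n-m) y x := by
          simp_rw [mul_comm]
        have h3 : (∫ x in (0:ℝ)..1,
              iteratedDeriv (2*n-m-1) y x * (starRingEnd ℂ) (iteratedDeriv (m+1) y x))
            = ∫ x in (0:ℝ)..1,
                (starRingEnd ℂ) (iteratedDeriv (m+1) y x) * iteratedDeriv (2*n-m-1) y x := by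
          simp_rw [mul_comm]
        rw [h2, h3]
        exact hIBP
      rw [ih hm', hJ, Finset.sum_range_succ]
      have e2 : 2*n-1-m = 2*n-m-1 := by omega
      rw [e2]
      ring
  -- the boundary sum equals the quasi-derivative pairing
  have hpow : ∀ j, j < n → ((-1:ℂ))^(n-1-j) = -((-1:ℂ)^n * (-1:ℂ)^j) := by
    intro j hj
    have h1 : n - 1 - j + 2*(j+1) = n + j + 1 := by omega
    calc ((-1:ℂ))^(n-1-j) = (-1:ℂ)^(n-1-j) * (((-1:ℂ)^2)^(j+1)) := by norm_num
      _ = (-1:ℂ)^(n-1-j+2*(j+1)) := by rw [← pow_mul, ← pow_add]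
      _ = (-1:ℂ)^(n+j+1) := by rw [h1]
      _ = -((-1:ℂ)^n * (-1:ℂ)^j) := by rw [pow_add, pow_add]; ring
  have hsum : (∑ k : Fin (2 * n), yvee n y k * (starRingEnd ℂ) (ywedge n y k))
      = (-1:ℂ)^n * ∑ j ∈ Finset.range n, (-1:ℂ)^j *
          (iteratedDeriv (2*n-1-j) y 1 * (starRingEnd ℂ) (iteratedDeriv j y 1)
            - iteratedDeriv (2*n-1-j) y 0 * (starRingEnd ℂ) (iteratedDeriv j y 0)) := by
    have h0 : (∑ k : Fin (2 * n), yvee n y k * (starRingEnd ℂ) (ywedge n y k))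
        = ∑ j ∈ Finset.range (2*n),
            (if j < n then (-1 : ℂ) ^ (n - 1 - j) * iteratedDeriv (2 * n - 1 - j) y 0
              else -((-1 : ℂ) ^ (n - 1 - (j - n)) * iteratedDeriv (2 * n - 1 - (j - n)) y 1))
            * (starRingEnd ℂ) (if j < n then iteratedDeriv j y 0 else iteratedDeriv (j - n) y 1) := by
      rw [← Fin.sum_univ_eq_sum_range]
      rfl
    rw [h0, two_mul, Finset.sum_range_add]
    rw [Finset.mul_sum, ← Finset.sum_add_distrib]
    apply Finset.sum_congr rfl
    intro j hj
    have hjn : j < n := Finset.mem_range.mp hj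
    have hj2 : ¬ (n + j < n) := by omega
    have hj3 : n + j - n = j := by omega
    rw [if_pos hjn, if_pos hjn, if_neg hj2, if_neg hj2, hj3, hpow j hjn]
    ring
  -- compute the left-hand side
  have hI : ((-Complex.I))^(2*n) = ((-1:ℂ))^n := by
    rw [pow_mul]
    norm_num [Complex.I_sq]
  have hreal : (∫ x in (0:ℝ)..1,
      iteratedDeriv n y x * (starRingEnd ℂ) (iteratedDeriv n y x))
      = ((∫ x in (0:ℝ)..1, Complex.normSq (iteratedDeriv n y x) : ℝ) : ℂ) := by
    simp_rw [Complex.mul_conj]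
    exact intervalIntegral.integral_ofReal
  have hL : (∫ x in (0:ℝ)..1,
        (-Complex.I) ^ (2 * n) * iteratedDeriv (2 * n) y x * (starRingEnd ℂ) (y x))
      = ((-1:ℂ)^n * ∑ j ∈ Finset.range n, (-1:ℂ)^j *
          (iteratedDeriv (2*n-1-j) y 1 * (starRingEnd ℂ) (iteratedDeriv j y 1)
            - iteratedDeriv (2*n-1-j) y 0 * (starRingEnd ℂ) (iteratedDeriv j y 0)))
        + ((∫ x in (0:ℝ)..1, Complex.normSq (iteratedDeriv n y x) : ℝ) : ℂ) := by
    simp_rw [hI, mul_assoc]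
    rw [intervalIntegral.integral_const_mul, key n le_rfl]
    have e4 : 2*n - n = n := by omega
    rw [e4, hreal, mul_add, ← mul_assoc, ← pow_add]
    have : ((-1:ℂ))^(n+n) = 1 := Even.neg_one_pow ⟨n, rfl⟩
    rw [this, one_mul]
  rw [hL, hsum, Complex.add_im, Complex.ofReal_im, add_zero]
end

section
/- Let m ≥ 1 and let C ∈ ℂ^{m×2m} be a system of boundary conditions of rank m. Then C is normalized if and only if C is in minimal form, i.e. Σ_{j=1}^m k_j(C) ≤ Σ_{j=1}^m k_j(T·C) for every invertible m×m complex matrix T. -/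
/-- A system of boundary conditions of order `m` is a matrix `C ∈ ℂ^{m×2m}`; we index
the `2m` columns by `Fin m ⊕ Fin m`: `Sum.inl k` is the coefficient of `y^{(k)}(0)` and
`Sum.inr k` that of `y^{(k)}(1)`.  The order `k_j(C)` of row `j` is the largest `k` with
`(C_{j,k}, C_{j,m+k}) ≠ (0,0)`. -/
noncomputable def rowOrder {m : ℕ} (C : Matrix (Fin m) (Fin m ⊕ Fin m) ℂ) (j : Fin m) : ℕ :=
  sSup {k : ℕ | ∃ h : k < m, C j (Sum.inl ⟨k, h⟩) ≠ 0 ∨ C j (Sum.inr ⟨k, h⟩) ≠ 0}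

/-- The leading pair `(α_j, β_j) = (C_{j,k_j}, C_{j,m+k_j})` of row `j`. -/
noncomputable def leadingPair {m : ℕ} (C : Matrix (Fin m) (Fin m ⊕ Fin m) ℂ) (j : Fin m) :
    ℂ × ℂ :=
  if h : rowOrder C j < m then
    (C j (Sum.inl ⟨rowOrder C j, h⟩), C j (Sum.inr ⟨rowOrder C j, h⟩))
  else 0

/-- The system `C` is normalized if, for every value `k`, the leading pairs of the rows
of order `k` are linearly independent in `ℂ²`. -/
def IsNormalized {m : ℕ} (C : Matrix (Fin m) (Fin m ⊕ Fin m) ℂ) : Prop :=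
  ∀ k : ℕ, LinearIndependent ℂ (fun j : {j : Fin m // rowOrder C j = k} => leadingPair C j.1)

/-!
Let `V_k` be the space of rows of order `≤ k`. If `C` is normalized, the leading pairs cannot
cancel, so a combination `∑ g_j C_j` has order at least that of every row `C_j` with `g_j ≠ 0`;
hence the row space of `C` meets `V_k` in the span of the rows of `C` of order `≤ k`. Any
equivalent system has independent rows in that row space, so for every `k` it has at most as many
rows of order `≤ k` as `C`, and its order sum is at least that of `C`. Conversely, a relation
among the leading pairs of the rows of order `k` gives a nonzero combination of these rows of
order `< k`; replacing one of them by it is an invertible row operation lowering the order sum.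
-/

namespace Finset

theorem sum_eq_sum_range_card_filter_lt {ι : Type*} [Fintype ι] (f : ι → ℕ) {N : ℕ}
    (hN : ∀ i, f i ≤ N) : ∑ i, f i = ∑ k ∈ range N, #{i | k < f i} := by
  simp only [card_filter]
  rw [sum_comm]
  refine sum_congr rfl fun i _ => ?_
  have : {k ∈ range N | k < f i} = range (f i) := by
    ext k
    simpa using fun h => h.trans_le (hN i)
  rw [← card_filter, this, card_range]

theorem sum_le_sum_of_card_filter_le {ι : Type*} [Fintype ι] {f g : ι → ℕ}
    (h : ∀ k, #{i | g i ≤ k} ≤ #{i | f i ≤ k}) : ∑ i, f i ≤ ∑ i, g i := by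
  rw [sum_eq_sum_range_card_filter_lt f fun i => le_sup_of_le_left (le_sup (mem_univ i)),
    sum_eq_sum_range_card_filter_lt g fun i => le_sup_of_le_right (le_sup (mem_univ i))]
  refine sum_le_sum fun k _ => ?_
  have hf := card_filter_add_card_filter_not (s := univ) (fun i => f i ≤ k)
  have hg := card_filter_add_card_filter_not (s := univ) (fun i => g i ≤ k)
  simp only [not_le] at hf hg
  have := h k
  omega

end Finset

theorem Matrix.linearIndependent_row_of_rank_eq_card {ι n K : Type*} [Fintype ι] [Fintype n]
    [Field K] {A : Matrix ι n K} (h : A.rank = Fintype.card ι) : LinearIndependent K A.row := by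
  rw [linearIndependent_iff_card_eq_finrank_span, Set.finrank, ← rank_eq_finrank_span_row, h]

namespace BoundaryConditions

open Matrix Submodule Module
open scoped Finset

variable {m : ℕ}

def pairAt (i : Fin m) : (Fin m ⊕ Fin m → ℂ) →ₗ[ℂ] ℂ × ℂ :=
  (LinearMap.proj (Sum.inl i)).prod (LinearMap.proj (Sum.inr i))

lemma pairAt_eq_zero_iff {i : Fin m} {r : Fin m ⊕ Fin m → ℂ} :
    pairAt i r = 0 ↔ r (Sum.inl i) = 0 ∧ r (Sum.inr i) = 0 :=
  Prod.mk_eq_zero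

noncomputable def order (r : Fin m ⊕ Fin m → ℂ) : ℕ :=
  sSup {k : ℕ | ∃ h : k < m, r (Sum.inl ⟨k, h⟩) ≠ 0 ∨ r (Sum.inr ⟨k, h⟩) ≠ 0}

lemma rowOrder_eq_order (C : Matrix (Fin m) (Fin m ⊕ Fin m) ℂ) (j : Fin m) :
    rowOrder C j = order (C j) := rfl

lemma order_bddAbove (r : Fin m ⊕ Fin m → ℂ) :
    BddAbove {k : ℕ | ∃ h : k < m, r (Sum.inl ⟨k, h⟩) ≠ 0 ∨ r (Sum.inr ⟨k, h⟩) ≠ 0} :=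
  ⟨m, fun _ ⟨h, _⟩ => h.le⟩

lemma order_le_iff {r : Fin m ⊕ Fin m → ℂ} {k : ℕ} :
    order r ≤ k ↔ ∀ i : Fin m, k < i → pairAt i r = 0 := by
  rw [order, csSup_le_iff' (order_bddAbove r)]
  refine ⟨fun h i hki => ?_, fun h l ⟨hl, hne⟩ => ?_⟩
  · by_contra hne
    rw [pairAt_eq_zero_iff, not_and_or] at hne
    exact (h i ⟨i.2, hne⟩).not_gt hki
  · by_contra hlk
    have h0 := pairAt_eq_zero_iff.1 (h ⟨l, hl⟩ (not_le.1 hlk))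
    exact hne.elim (· h0.1) (· h0.2)

lemma exists_pairAt_order_ne_zero {r : Fin m ⊕ Fin m → ℂ} (hr : r ≠ 0) :
    ∃ h : order r < m, pairAt ⟨order r, h⟩ r ≠ 0 := by
  obtain ⟨x, hx⟩ := Function.ne_iff.1 hr
  have hne :
      {k : ℕ | ∃ h : k < m, r (Sum.inl ⟨k, h⟩) ≠ 0 ∨ r (Sum.inr ⟨k, h⟩) ≠ 0}.Nonempty := by
    rcases x with i | i
    exacts [⟨i, i.2, Or.inl hx⟩, ⟨i, i.2, Or.inr hx⟩]
  obtain ⟨h, hpair⟩ := Nat.sSup_mem hne (order_bddAbove r)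
  exact ⟨h, fun h0 => hpair.elim (· (pairAt_eq_zero_iff.1 h0).1) (· (pairAt_eq_zero_iff.1 h0).2)⟩

lemma order_lt (hm : 0 < m) (r : Fin m ⊕ Fin m → ℂ) : order r < m := by
  have : order r ≤ m - 1 := order_le_iff.2 fun i hi => absurd hi (by omega)
  omega

lemma order_lt_of_pairAt_eq_zero {r : Fin m ⊕ Fin m → ℂ} {i : Fin m} (hr : r ≠ 0)
    (hle : order r ≤ i) (hi : pairAt i r = 0) : order r < i := by
  obtain ⟨h, hne⟩ := exists_pairAt_order_ne_zero hr
  refine hle.lt_of_ne fun heq => hne ?_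
  rwa [show (⟨order r, h⟩ : Fin m) = i from Fin.ext heq]

lemma leadingPair_eq_pairAt {C : Matrix (Fin m) (Fin m ⊕ Fin m) ℂ} {j i : Fin m}
    (h : rowOrder C j = i) : leadingPair C j = pairAt i (C j) := by
  have hlt : rowOrder C j < m := h ▸ i.2
  rw [leadingPair, dif_pos hlt, show (⟨rowOrder C j, hlt⟩ : Fin m) = i from Fin.ext h]
  rfl

def orderLE (k : ℕ) : Submodule ℂ (Fin m ⊕ Fin m → ℂ) :=
  ⨅ (i : Fin m) (_ : k < i), LinearMap.ker (pairAt i)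

lemma mem_orderLE {r : Fin m ⊕ Fin m → ℂ} {k : ℕ} : r ∈ orderLE k ↔ order r ≤ k := by
  simp [orderLE, order_le_iff]

variable {C : Matrix (Fin m) (Fin m ⊕ Fin m) ℂ} {g : Fin m → ℂ}

lemma order_vecMul_le {k : ℕ} (hg : ∀ j, g j ≠ 0 → rowOrder C j ≤ k) :
    order (g ᵥ* C) ≤ k := by
  rw [← mem_orderLE, vecMul_eq_sum]
  refine sum_mem fun j _ => ?_
  by_cases hj : g j = 0
  · simp [hj]
  · exact smul_mem _ _ (mem_orderLE.2 (hg j hj))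

lemma pairAt_vecMul {i : Fin m} (hg : ∀ j, g j ≠ 0 → rowOrder C j ≤ i) :
    pairAt i (g ᵥ* C) = ∑ j : {j // rowOrder C j = i}, g j • leadingPair C j := by
  classical
  calc pairAt i (g ᵥ* C) = ∑ j with rowOrder C j = i, g j • pairAt i (C j) := by
        simp only [vecMul_eq_sum, map_sum, map_smul]
        refine (Finset.sum_filter_of_ne fun j _ hj => ?_).symm
        have hgj : g j ≠ 0 := fun h => hj (by simp [h])
        by_contra hne
        exact hj (by rw [order_le_iff.1 le_rfl i ((hg j hgj).lt_of_ne hne), smul_zero])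
    _ = ∑ j : {j // rowOrder C j = i}, g j • pairAt i (C j) :=
        Finset.sum_subtype _ (by simp) (fun j => g j • pairAt i (C j))
    _ = _ := Finset.sum_congr rfl fun j _ => by rw [leadingPair_eq_pairAt j.2]

lemma eq_zero_of_order_vecMul_le (hC : IsNormalized C) {k : ℕ}
    (hk : order (g ᵥ* C) ≤ k) {j : Fin m} (hj : k < rowOrder C j) : g j = 0 := by
  classical
  by_contra hgj
  obtain ⟨j₀, hj₀, hmax⟩ := Finset.exists_max_image {j | g j ≠ 0} (rowOrder C) ⟨j, by simpa⟩
  set K : Fin m := ⟨rowOrder C j₀, order_lt j₀.pos _⟩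
  have hsupp : ∀ j, g j ≠ 0 → rowOrder C j ≤ K := fun j hj => hmax j (by simpa)
  have hkK : k < K := hj.trans_le (hsupp j hgj)
  -- at the top order `K` of the support of `g`, the pair of `g ᵥ* C` vanishes, which is a
  -- relation among the leading pairs of order `K`
  have hrel := pairAt_vecMul hsupp
  rw [order_le_iff.1 hk K hkK, eq_comm] at hrel
  exact (Finset.mem_filter.1 hj₀).2 <|
    Fintype.linearIndependent_iff.1 (hC K) (fun j => g j) hrel ⟨j₀, rfl⟩

lemma range_vecMulLinear_inf_orderLE_le (hC : IsNormalized C) (k : ℕ) :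
    LinearMap.range C.vecMulLinear ⊓ orderLE k ≤
      span ℂ (Set.range fun j : {j // rowOrder C j ≤ k} => C j) := by
  rintro _ ⟨⟨g, rfl⟩, hk⟩
  rw [vecMulLinear_apply, vecMul_eq_sum]
  refine sum_mem fun j _ => ?_
  by_cases hj : rowOrder C j ≤ k
  · exact smul_mem _ _ (subset_span ⟨⟨j, hj⟩, rfl⟩)
  · rw [eq_zero_of_order_vecMul_le hC (mem_orderLE.1 hk) (not_le.1 hj), zero_smul]
    exact zero_mem _

lemma finrank_inf_orderLE_le (hC : IsNormalized C) (k : ℕ) :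
    finrank ℂ ↥(LinearMap.range C.vecMulLinear ⊓ orderLE k) ≤ #{j | rowOrder C j ≤ k} := by
  refine (finrank_mono (range_vecMulLinear_inf_orderLE_le hC k)).trans ?_
  simpa [Set.finrank, Fintype.card_subtype] using
    finrank_range_le_card (R := ℂ) fun j : {j // rowOrder C j ≤ k} => C j

lemma card_le_finrank_inf_orderLE {W : Submodule ℂ (Fin m ⊕ Fin m → ℂ)}
    (hC : LinearIndependent ℂ C.row) (hW : ∀ j, C j ∈ W) (k : ℕ) :
    #{j | rowOrder C j ≤ k} ≤ finrank ℂ ↥(W ⊓ orderLE k) := by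
  rw [← Fintype.card_subtype, ← finrank_span_eq_card (hC.comp _ Subtype.val_injective)]
  refine finrank_mono (span_le.2 ?_)
  rintro _ ⟨j, rfl⟩
  exact ⟨hW j, mem_orderLE.2 j.2⟩

theorem sum_rowOrder_le_of_isNormalized (hC : IsNormalized C)
    {D : Matrix (Fin m) (Fin m ⊕ Fin m) ℂ} (hD : LinearIndependent ℂ D.row)
    (hDC : ∀ j, D j ∈ LinearMap.range C.vecMulLinear) :
    ∑ j, rowOrder C j ≤ ∑ j, rowOrder D j :=
  Finset.sum_le_sum_of_card_filter_le fun k =>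
    (card_le_finrank_inf_orderLE hD hDC k).trans (finrank_inf_orderLE_le hC k)

lemma exists_order_vecMul_lt_of_not_isNormalized (hC : LinearIndependent ℂ C.row)
    (hn : ¬ IsNormalized C) : ∃ j c, c j ≠ 0 ∧ order (c ᵥ* C) < rowOrder C j := by
  classical
  obtain ⟨k, hk⟩ := not_forall.1 hn
  obtain ⟨g, hrel, j₀, hj₀⟩ := Fintype.not_linearIndependent_iff.1 hk
  set K : Fin m := ⟨k, j₀.2 ▸ order_lt j₀.1.pos _⟩
  let c : Fin m → ℂ := fun j => if h : rowOrder C j = k then g ⟨j, h⟩ else 0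
  have hc : ∀ j, c j ≠ 0 → rowOrder C j = k := fun j hj => by
    by_contra h
    exact hj (dif_neg h)
  have hcj₀ : c j₀ ≠ 0 := by simpa [c, j₀.2] using hj₀
  have hK : pairAt K (c ᵥ* C) = 0 := by
    rw [pairAt_vecMul fun j hj => (hc j hj).le, ← hrel]
    exact Finset.sum_congr rfl fun j _ => by simp [c, show rowOrder C j = k from j.2]
  have hne : c ᵥ* C ≠ 0 := fun h0 =>
    hcj₀ (congrFun (vecMul_injective_iff.2 hC (h0.trans (zero_vecMul C).symm)) j₀)
  refine ⟨j₀, c, hcj₀, ?_⟩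
  rw [j₀.2]
  exact order_lt_of_pairAt_eq_zero (i := K) hne (order_vecMul_le fun j hj => (hc j hj).le) hK

lemma sum_rowOrder_updateRow_lt {j : Fin m} {r : Fin m ⊕ Fin m → ℂ}
    (h : order r < rowOrder C j) : ∑ i, rowOrder (C.updateRow j r) i < ∑ i, rowOrder C i := by
  refine Finset.sum_lt_sum (fun i _ => ?_) ⟨j, Finset.mem_univ _, by simpa [rowOrder_eq_order]⟩
  rcases eq_or_ne i j with rfl | hi
  · simpa [rowOrder_eq_order] using h.le
  · simp [rowOrder_eq_order, hi]

lemma exists_isUnit_sum_rowOrder_mul_lt (hC : LinearIndependent ℂ C.row)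
    (hn : ¬ IsNormalized C) :
    ∃ T : Matrix (Fin m) (Fin m) ℂ, IsUnit T ∧ ∑ j, rowOrder (T * C) j < ∑ j, rowOrder C j := by
  classical
  obtain ⟨j, c, hcj, hlt⟩ := exists_order_vecMul_lt_of_not_isNormalized hC hn
  refine ⟨(1 : Matrix (Fin m) (Fin m) ℂ).updateRow j c, ?_, ?_⟩
  · have hdet := det_updateRow_sum (1 : Matrix (Fin m) (Fin m) ℂ) j c
    rw [← vecMul_eq_sum, vecMul_one, det_one, smul_eq_mul, mul_one] at hdet
    rw [isUnit_iff_isUnit_det, hdet]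
    exact hcj.isUnit
  · rw [updateRow_mul, Matrix.one_mul]
    exact sum_rowOrder_updateRow_lt hlt

end BoundaryConditions

open BoundaryConditions

theorem stmt13_general (m : ℕ) (C : Matrix (Fin m) (Fin m ⊕ Fin m) ℂ)
    (hrank : C.rank = m) :
    IsNormalized C ↔
      ∀ T : Matrix (Fin m) (Fin m) ℂ, IsUnit T →
        ∑ j, rowOrder C j ≤ ∑ j, rowOrder (T * C) j := by
  have hC : LinearIndependent ℂ C.row :=
    Matrix.linearIndependent_row_of_rank_eq_card (by rw [hrank, Fintype.card_fin])
  refine ⟨fun hN T hT => sum_rowOrder_le_of_isNormalized hN ?_ fun j => ⟨T j, ?_⟩, fun hmin => ?_⟩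
  · refine Matrix.linearIndependent_row_of_rank_eq_card ?_
    rw [Matrix.rank_mul_eq_right_of_isUnit_det T C ((Matrix.isUnit_iff_isUnit_det T).1 hT),
      hrank, Fintype.card_fin]
  · exact (Matrix.mul_apply_eq_vecMul T C j).symm
  · by_contra hn
    obtain ⟨T, hT, hlt⟩ := exists_isUnit_sum_rowOrder_mul_lt hC hn
    exact (hmin T hT).not_gt hlt

/-- a rank-`m` system of boundary conditions is normalized iff it is in
minimal form, i.e. the sum of its row orders is minimal among all equivalent systems
`T·C`, `T` invertible. -/
theorem stmt13 (m : ℕ) (hm : 1 ≤ m) (C : Matrix (Fin m) (Fin m ⊕ Fin m) ℂ)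
    (hrank : C.rank = m) :
    IsNormalized C ↔
      ∀ T : Matrix (Fin m) (Fin m) ℂ, IsUnit T →
        ∑ j, rowOrder C j ≤ ∑ j, rowOrder (T * C) j :=
  stmt13_general m C hrank
end

section
/- Let m ≥ 1 and let C, C′ ∈ ℂ^{m×2m} be two normalized systems of boundary conditions of rank m that are equivalent (C′ = T·C for some invertible m×m complex matrix T). Then the multiset of orders { k_1(C), …, k_m(C) } equals the multiset of orders { k_1(C′), …, k_m(C′) }; i.e., the set of orders of normalized boundary conditions does not depend on the transformations used to normalize them. -/
/-!
In a normalized system no cancellation can happen among leading terms: if a combination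
`∑ cⱼ Cⱼ` of rows vanishes in all columns of order `≥ k`, then `cⱼ = 0` for every row of
order `≥ k`, since at the largest order carrying a nonzero coefficient the leading pairs
would satisfy a nontrivial linear relation. Hence the rows of order `< k` form a basis of the
subspace of the row space consisting of vectors vanishing in the columns of order `≥ k`.
The number of rows of order `< k` is therefore determined by the row space, which is
unchanged by an invertible `T`, and these counts for all `k` determine the multiset of orders.
-/

open Finset Submodule

section RowSpace

variable {R : Type*} [CommRing R] {l n : Type*} [Fintype l] [DecidableEq l]

theorem Matrix.span_range_row_mul_of_isUnit {T : Matrix l l R} (hT : IsUnit T) (C : Matrix l n R) :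
    span R (Set.range (T * C).row) = span R (Set.range C.row) := by
  rw [← range_vecMulLinear, ← range_vecMulLinear]
  have : (T * C).vecMulLinear = C.vecMulLinear ∘ₗ T.vecMulLinear :=
    LinearMap.ext fun v ↦ (Matrix.vecMul_vecMul v T C).symm
  rw [this, LinearMap.range_comp_of_range_eq_top]
  exact LinearMap.range_eq_top.mpr (Matrix.vecMul_surjective_iff_isUnit.mpr hT)

end RowSpace

theorem Multiset.map_univ_eq_of_card_filter_lt_eq {ι : Type*} [Fintype ι] {f g : ι → ℕ}
    (h : ∀ k, #{i | f i < k} = #{i | g i < k}) :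
    Multiset.map f Finset.univ.val = Multiset.map g Finset.univ.val := by
  classical
  have card_eq : ∀ φ : ι → ℕ, ∀ k, #{i | φ i < k + 1} = #{i | φ i < k} + #{i | φ i = k} := by
    intro φ k
    rw [← Finset.card_union_of_disjoint (Finset.disjoint_filter.mpr fun _ _ h ↦ h.ne)]
    congr 1
    ext i
    simp only [Finset.mem_filter, Finset.mem_union, Finset.mem_univ, true_and]
    omega
  ext k
  simp only [Multiset.count_map, ← Finset.filter_val, ← Finset.card_def, eq_comm (a := k)]
  have := h (k + 1)
  rw [card_eq f, card_eq g, h k] at this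
  omega

section BoundaryConditions

variable {m : ℕ} {C : Matrix (Fin m) (Fin m ⊕ Fin m) ℂ}

def columnPair (l : Fin m) : (Fin m ⊕ Fin m → ℂ) →ₗ[ℂ] ℂ × ℂ :=
  (LinearMap.proj (Sum.inl l)).prod (LinearMap.proj (Sum.inr l))

def vanishingFrom (m k : ℕ) : Submodule ℂ (Fin m ⊕ Fin m → ℂ) :=
  ⨅ (l : Fin m) (_ : k ≤ (l : ℕ)), LinearMap.ker (columnPair l)

theorem mem_vanishingFrom {k : ℕ} {v : Fin m ⊕ Fin m → ℂ} :
    v ∈ vanishingFrom m k ↔ ∀ l : Fin m, k ≤ l → columnPair l v = 0 := by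
  simp [vanishingFrom]

theorem rowOrder_lt (C : Matrix (Fin m) (Fin m ⊕ Fin m) ℂ) (j : Fin m) : rowOrder C j < m :=
  (csSup_le' fun _ hk ↦ Nat.le_pred_of_lt hk.1).trans_lt (Nat.pred_lt j.pos.ne')

theorem columnPair_row_eq_zero_of_rowOrder_lt {j l : Fin m} (h : rowOrder C j < l) :
    columnPair l (C.row j) = 0 := by
  by_contra hne
  have hl : (l : ℕ) ∈ {k : ℕ | ∃ h : k < m, C j (Sum.inl ⟨k, h⟩) ≠ 0 ∨ C j (Sum.inr ⟨k, h⟩) ≠ 0} :=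
    ⟨l.isLt, by simpa [columnPair, Prod.ext_iff, or_iff_not_imp_left] using hne⟩
  exact h.not_ge (le_csSup ⟨m, fun _ hk ↦ hk.1.le⟩ hl)

theorem columnPair_row_eq_leadingPair {j l : Fin m} (h : rowOrder C j = l) :
    columnPair l (C.row j) = leadingPair C j := by
  obtain ⟨l, hl⟩ := l
  subst h
  simp [columnPair, leadingPair, hl]

theorem row_mem_vanishingFrom {j : Fin m} {k : ℕ} (h : rowOrder C j < k) :
    C.row j ∈ vanishingFrom m k :=
  mem_vanishingFrom.mpr fun _ hl ↦ columnPair_row_eq_zero_of_rowOrder_lt (h.trans_le hl)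

theorem sum_smul_leadingPair_eq_columnPair {c : Fin m → ℂ} {l : Fin m}
    (hc : ∀ i, c i ≠ 0 → rowOrder C i ≤ l) :
    ∑ i : {i // rowOrder C i = l}, c i • leadingPair C i = columnPair l (∑ i, c i • C.row i) := by
  have hrest : ∑ i : {i // rowOrder C i ≠ l}, c i • columnPair l (C.row i) = 0 := by
    refine Finset.sum_eq_zero fun i _ ↦ ?_
    by_cases hci : c i = 0
    · rw [hci, zero_smul]
    · rw [columnPair_row_eq_zero_of_rowOrder_lt ((hc i hci).lt_of_ne i.2), smul_zero]
  simp only [map_sum, map_smul]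
  rw [← Fintype.sum_subtype_add_sum_subtype (fun i ↦ rowOrder C i = l), hrest, add_zero]
  exact Finset.sum_congr rfl fun i _ ↦ by rw [columnPair_row_eq_leadingPair i.2]

theorem IsNormalized.coeff_eq_zero_of_sum_mem_vanishingFrom (hC : IsNormalized C)
    {c : Fin m → ℂ} {k : ℕ} (hv : ∑ i, c i • C.row i ∈ vanishingFrom m k) {j : Fin m}
    (hj : k ≤ rowOrder C j) : c j = 0 := by
  classical
  by_contra hcj
  obtain ⟨j₀, hj₀, hmax⟩ :=
    Finset.exists_max_image {i | c i ≠ 0} (rowOrder C) ⟨j, by simpa using hcj⟩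
  simp only [Finset.mem_filter, Finset.mem_univ, true_and] at hj₀ hmax
  let l : Fin m := ⟨rowOrder C j₀, rowOrder_lt C j₀⟩
  have hsum : ∑ i : {i // rowOrder C i = l}, c i • leadingPair C i = 0 := by
    rw [sum_smul_leadingPair_eq_columnPair hmax]
    exact mem_vanishingFrom.mp hv l (hj.trans (hmax j hcj))
  exact hj₀ (Fintype.linearIndependent_iff.mp (hC l) (fun i ↦ c i) hsum ⟨j₀, rfl⟩)

theorem IsNormalized.linearIndependent_row (hC : IsNormalized C) : LinearIndependent ℂ C.row :=
  Fintype.linearIndependent_iff.mpr fun _ hc _ ↦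
    hC.coeff_eq_zero_of_sum_mem_vanishingFrom (k := 0) (hc ▸ zero_mem _) (Nat.zero_le _)

theorem IsNormalized.span_row_inf_vanishingFrom (hC : IsNormalized C) (k : ℕ) :
    span ℂ (Set.range C.row) ⊓ vanishingFrom m k =
      span ℂ (Set.range fun j : {j // rowOrder C j < k} ↦ C.row j) := by
  refine le_antisymm ?_ (le_inf (span_mono ?_) (span_le.mpr ?_))
  · rintro v ⟨hv, hvk⟩
    obtain ⟨c, rfl⟩ := (mem_span_range_iff_exists_fun ℂ).mp hv
    have hrest : ∑ i : {i // ¬rowOrder C i < k}, c i • C.row i = 0 :=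
      Finset.sum_eq_zero fun i _ ↦ by
        rw [hC.coeff_eq_zero_of_sum_mem_vanishingFrom hvk (not_lt.mp i.2), zero_smul]
    rw [← Fintype.sum_subtype_add_sum_subtype (fun i ↦ rowOrder C i < k), hrest, add_zero]
    exact sum_mem fun i _ ↦ smul_mem _ _ (subset_span ⟨i, rfl⟩)
  · rintro _ ⟨j, rfl⟩
    exact ⟨j, rfl⟩
  · rintro _ ⟨j, rfl⟩
    exact row_mem_vanishingFrom j.2

theorem IsNormalized.finrank_span_row_inf_vanishingFrom (hC : IsNormalized C) (k : ℕ) :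
    Module.finrank ℂ ↥(span ℂ (Set.range C.row) ⊓ vanishingFrom m k) = #{j | rowOrder C j < k} := by
  rw [hC.span_row_inf_vanishingFrom,
    finrank_span_eq_card (b := fun j : {j // rowOrder C j < k} ↦ C.row j)
      (hC.linearIndependent_row.comp _ Subtype.val_injective),
    Fintype.card_subtype]

end BoundaryConditions

theorem stmt14_general (m : ℕ) (C C' : Matrix (Fin m) (Fin m ⊕ Fin m) ℂ)
    (T : Matrix (Fin m) (Fin m) ℂ) (hT : IsUnit T) (hC' : C' = T * C)
    (hnorm : IsNormalized C) (hnorm' : IsNormalized C') :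
    Multiset.map (fun j => rowOrder C j) Finset.univ.val
      = Multiset.map (fun j => rowOrder C' j) Finset.univ.val := by
  refine Multiset.map_univ_eq_of_card_filter_lt_eq fun k ↦ ?_
  rw [← hnorm.finrank_span_row_inf_vanishingFrom, ← hnorm'.finrank_span_row_inf_vanishingFrom,
    hC', Matrix.span_range_row_mul_of_isUnit hT]

/-- two equivalent normalized rank-`m` systems of boundary conditions
have the same multiset of row orders. -/
theorem stmt14 (m : ℕ) (hm : 1 ≤ m) (C C' : Matrix (Fin m) (Fin m ⊕ Fin m) ℂ)
    (hrank : C.rank = m) (T : Matrix (Fin m) (Fin m) ℂ) (hT : IsUnit T) (hC' : C' = T * C)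
    (hnorm : IsNormalized C) (hnorm' : IsNormalized C') :
    Multiset.map (fun j => rowOrder C j) Finset.univ.val
      = Multiset.map (fun j => rowOrder C' j) Finset.univ.val :=
  stmt14_general m C C' T hT hC' hnorm hnorm'
end
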